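/- Let K be a normal Hopf subalgebra of a finite-dimensional semisimple Hopf algebra H. Then F(K) and K^⊥ are D(H)-submodules of H* (with H* the D(H)-module induced from the trivial H-module), each a sum of full homogeneous components, and the decomposition H* = F(K) ⊕ K^⊥ is a decomposition of D(H)-modules. -/

import Mathlib

open TensorProduct

noncomputable section

namespace Paper

set_option linter.unusedSectionVars false

variable (k : Type) [Field k]



section Conv

variable (H : Type) [AddCommGroup H] [Module k H] [Coalgebra k H]

/-- Convolution product on the dual of a coalgebra. -/
def conv (f g : Module.Dual k H) : Module.Dual k H :=
  (LinearMap.mul' k k) ∘ₗ (TensorProduct.map f g) ∘ₗ (Coalgebra.comul (R := k))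

end Conv

section Fourier

variable (H : Type) [Ring H] [Algebra k H]

/-- The Fourier transform associated to a functional `t`: `fourier t a = (b ↦ t (b * a))`. -/
def fourier (t : Module.Dual k H) : H →ₗ[k] Module.Dual k H where
  toFun a := t ∘ₗ LinearMap.mulRight k a
  map_add' a b := by ext x; simp [mul_add]
  map_smul' c a := by ext x; simp [mul_smul_comm]

end Fourier

section Act

variable (H : Type) [Ring H] [HopfAlgebra k H]

/-- The bilinear map sending `p ⊗ q` to the operator `x ↦ p * x * q`. -/
def sandwich : H ⊗[k] H →ₗ[k] (H →ₗ[k] H) :=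
  TensorProduct.lift
    { toFun := fun p =>
        { toFun := fun q => (LinearMap.mulLeft k p) ∘ₗ (LinearMap.mulRight k q)
          map_add' := fun q r => by ext x; simp [mul_add]
          map_smul' := fun c q => by ext x; simp [mul_smul_comm] }
      map_add' := fun p p' => by ext q x; simp [add_mul]
      map_smul' := fun c p => by ext q x; simp [smul_mul_assoc] }

/-- The (left) adjoint action of `H` on itself: `adAct a x = ∑ a₁ * x * S(a₂)`. -/
def adAct : H →ₗ[k] (H →ₗ[k] H) :=
  (sandwich k H) ∘ₗ (LinearMap.lTensor H (HopfAlgebra.antipode (R := k))) ∘ₗ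
    (Coalgebra.comul (R := k))

/-- The action of `a ∈ H` on `f ∈ H*` given by `(a · f)(x) = f(∑ S(a₂) x a₁)`
(the coadjoint action appearing in the `D(H)`-module `H*`; here `S = S⁻¹` since `S² = id`). -/
def coadAct (a : H) (f : Module.Dual k H) : Module.Dual k H :=
  f ∘ₗ (sandwich k H
    ((LinearMap.rTensor H (HopfAlgebra.antipode (R := k)))
      ((TensorProduct.comm k H H) (Coalgebra.comul (R := k) a))))

/-- The action of `f ∈ H*` on `H` given by `f · h = ∑ f(S(h₁)) h₂` (with `S = S⁻¹`). -/
def dualAct (f : Module.Dual k H) : H →ₗ[k] H :=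
  (TensorProduct.lid k H).toLinearMap ∘ₗ
    (LinearMap.rTensor H (f ∘ₗ HopfAlgebra.antipode (R := k))) ∘ₗ (Coalgebra.comul (R := k))

/-- The operator `a ↦ ∑ a₁ χ(S(a₂))` associated to a functional `χ`. -/
def chiOp (χ : Module.Dual k H) : H →ₗ[k] H :=
  (TensorProduct.rid k H).toLinearMap ∘ₗ
    (LinearMap.lTensor H (χ ∘ₗ HopfAlgebra.antipode (R := k))) ∘ₗ (Coalgebra.comul (R := k))

/-- The map `v ↦ ∑ (S(v₃) * v₁) ⊗ v₂`. -/
def conormalMap : H →ₗ[k] H ⊗[k] H :=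
  (TensorProduct.comm k H H).toLinearMap ∘ₗ
  (LinearMap.lTensor H (LinearMap.mul' k H)) ∘ₗ
  (TensorProduct.assoc k H H H).toLinearMap ∘ₗ
  (TensorProduct.comm k H (H ⊗[k] H)).toLinearMap ∘ₗ
  (LinearMap.lTensor H (LinearMap.lTensor H (HopfAlgebra.antipode (R := k)))) ∘ₗ
  (LinearMap.lTensor H (Coalgebra.comul (R := k))) ∘ₗ
  (Coalgebra.comul (R := k))

/-- A subspace `I ⊆ H` is co-normal if `∑ S(v₃)v₁ ⊗ v₂ ∈ H ⊗ I` for every `v ∈ I`. -/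
def IsConormal (I : Submodule k H) : Prop :=
  ∀ v ∈ I, conormalMap k H v ∈ LinearMap.range (LinearMap.lTensor H I.subtype)

/-- The adjoint action of `H*` on itself, written via the canonical identifications:
`(adDual f g)(x) = ∑ f(x₁ * S(x₃)) g(x₂)`, i.e. `adDual f g = ∑ f₁ * g * S(f₂)` in `H*`. -/
def adDual (f g : Module.Dual k H) : Module.Dual k H :=
  (LinearMap.mul' k k) ∘ₗ (TensorProduct.map f g) ∘ₗ
  (LinearMap.rTensor H (LinearMap.mul' k H)) ∘ₗ
  (TensorProduct.assoc k H H H).symm.toLinearMap ∘ₗ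
  (LinearMap.lTensor H (TensorProduct.comm k H H).toLinearMap) ∘ₗ
  (LinearMap.lTensor H (LinearMap.lTensor H (HopfAlgebra.antipode (R := k)))) ∘ₗ
  (LinearMap.lTensor H (Coalgebra.comul (R := k))) ∘ₗ
  (Coalgebra.comul (R := k))

end Act

section Char

variable (H : Type) [Ring H] [Algebra k H]

/-- The character of an `H`-module `M` (trace of the action). -/
def moduleChar (M : Type) [AddCommGroup M] [Module k M] [Module H M]
    [IsScalarTower k H M] : Module.Dual k H :=
  (LinearMap.trace k M) ∘ₗ (Algebra.lsmul k k M : H →ₐ[k] Module.End k M).toLinearMap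

/-- The character ring `C(H)` of `H`, as a subspace of `H*`: the span of characters of
finite-dimensional `H`-modules. -/
def charRing : Submodule k (Module.Dual k H) :=
  Submodule.span k {f | ∃ (M : Type) (_ : AddCommGroup M) (_ : Module k M) (_ : Module H M)
      (_ : IsScalarTower k H M) (_ : Module.Finite k M), f = moduleChar k H M}

/-- `f` is an irreducible character of `H`. -/
def IsIrrChar (f : Module.Dual k H) : Prop :=
  ∃ (M : Type) (_ : AddCommGroup M) (_ : Module k M) (_ : Module H M)
      (_ : IsScalarTower k H M), Module.Finite k M ∧ IsSimpleModule H M ∧ f = moduleChar k H M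

end Char




section Ind

variable (K H : Type) [Ring K] [Ring H] [HopfAlgebra k K] [HopfAlgebra k H]
variable (i : K →ₐc[k] H)
variable (V : Type) [AddCommGroup V] [Module k V] [Module K V] [IsScalarTower k K V]

/-- The subspace of `H ⊗ V` by which one quotients to obtain the induced module `H ⊗_K V`. -/
def indRel : Submodule k (H ⊗[k] V) :=
  Submodule.span k {z | ∃ (h : H) (x : K) (v : V), z = (h * i x) ⊗ₜ[k] v - h ⊗ₜ[k] (x • v)}

/-- The induced module `H ⊗_K V`. -/
abbrev IndMod := (H ⊗[k] V) ⧸ indRel k K H i V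

lemma indRel_mapsTo (h' : H) :
    (indRel k K H i V).map ((LinearMap.mulLeft k h').rTensor V) ≤ indRel k K H i V := by
  rw [indRel, Submodule.map_span]
  refine Submodule.span_le.2 ?_
  rintro _ ⟨_, ⟨h, x, v, rfl⟩, rfl⟩
  refine Submodule.subset_span ⟨h' * h, x, v, ?_⟩
  simp [mul_assoc]

/-- Left multiplication by `h' : H` on the induced module. -/
def indSmul (h' : H) : IndMod k K H i V →ₗ[k] IndMod k K H i V :=
  Submodule.mapQ _ _ ((LinearMap.mulLeft k h').rTensor V)
    (Submodule.map_le_iff_le_comap.mp (indRel_mapsTo k K H i V h'))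

lemma indSmul_mk (h' h : H) (v : V) :
    indSmul k K H i V h' (Submodule.Quotient.mk (h ⊗ₜ[k] v)) =
      Submodule.Quotient.mk ((h' * h) ⊗ₜ[k] v) := rfl

/-- The algebra map `H → End (IndMod)` defining the `H`-module structure on the
induced module. -/
def indActHom : H →ₐ[k] Module.End k (IndMod k K H i V) where
  toFun h' := indSmul k K H i V h'
  map_one' := by
    refine Submodule.linearMap_qext _ ?_
    ext h v
    simp only [LinearMap.coe_comp, Function.comp_apply, AlgebraTensorModule.curry_apply,
      curry_apply, LinearMap.coe_restrictScalars, Submodule.mkQ_apply, indSmul_mk, one_mul,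
      Module.End.one_apply]
  map_mul' a b := by
    refine Submodule.linearMap_qext _ ?_
    ext h v
    simp only [LinearMap.coe_comp, Function.comp_apply, AlgebraTensorModule.curry_apply,
      curry_apply, LinearMap.coe_restrictScalars, Submodule.mkQ_apply, indSmul_mk,
      Module.End.mul_apply, mul_assoc]
  map_zero' := by
    refine Submodule.linearMap_qext _ ?_
    ext h v
    simp only [LinearMap.coe_comp, Function.comp_apply, AlgebraTensorModule.curry_apply,
      curry_apply, LinearMap.coe_restrictScalars, Submodule.mkQ_apply, indSmul_mk, zero_mul,
      LinearMap.zero_apply]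
    rw [zero_tmul]
    exact Submodule.Quotient.mk_eq_zero _ |>.2 (Submodule.zero_mem _)
  map_add' a b := by
    refine Submodule.linearMap_qext _ ?_
    ext h v
    simp only [LinearMap.coe_comp, Function.comp_apply, AlgebraTensorModule.curry_apply,
      curry_apply, LinearMap.coe_restrictScalars, Submodule.mkQ_apply, indSmul_mk,
      LinearMap.add_apply, add_mul, add_tmul]
    rw [Submodule.Quotient.mk_add]
  commutes' c := by
    refine Submodule.linearMap_qext _ ?_
    ext h v
    simp only [LinearMap.coe_comp, Function.comp_apply, AlgebraTensorModule.curry_apply,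
      curry_apply, LinearMap.coe_restrictScalars, Submodule.mkQ_apply, indSmul_mk,
      Module.algebraMap_end_apply]
    rw [← Submodule.Quotient.mk_smul, smul_tmul', Algebra.smul_def]

instance : Module H (IndMod k K H i V) :=
  Module.compHom _ (indActHom k K H i V).toRingHom

instance : IsScalarTower k H (IndMod k K H i V) where
  smul_assoc c h z := by
    change indActHom k K H i V (c • h) z = c • (indActHom k K H i V h z)
    rw [map_smul]
    rfl

instance [Module.Finite k H] [Module.Finite k V] : Module.Finite k (IndMod k K H i V) :=
  Module.Finite.of_surjective (indRel k K H i V).mkQ (Submodule.Quotient.mk_surjective _)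

end Ind




section Subcoalg

variable (H : Type) [AddCommGroup H] [Module k H] [Coalgebra k H]

/-- `C` is a subcoalgebra of `H` if `Δ(C) ⊆ C ⊗ C`. -/
def IsSubcoalgebra (C : Submodule k H) : Prop :=
  ∀ x ∈ C, Coalgebra.comul (R := k) x ∈
    LinearMap.range (TensorProduct.map C.subtype C.subtype)

/-- A simple (nonzero, minimal) subcoalgebra. -/
def IsSimpleSubcoalgebra (C : Submodule k H) : Prop :=
  IsSubcoalgebra k H C ∧ C ≠ ⊥ ∧
    ∀ D : Submodule k H, D ≤ C → IsSubcoalgebra k H D → D = ⊥ ∨ D = C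

/-- The coaction `C → H ⊗ C` of a subcoalgebra, obtained by corestricting `Δ`. -/
def coact (C : Submodule k H) (hC : IsSubcoalgebra k H C) : C →ₗ[k] H ⊗[k] C :=
  ((LinearEquiv.ofInjective (LinearMap.lTensor H C.subtype)
      (Module.Flat.lTensor_preserves_injective_linearMap C.subtype C.injective_subtype)).symm :
        LinearMap.range (LinearMap.lTensor H C.subtype) ≃ₗ[k] H ⊗[k] C) ∘ₗ
    (LinearMap.codRestrict (LinearMap.range (LinearMap.lTensor H C.subtype))
      ((Coalgebra.comul (R := k)) ∘ₗ C.subtype)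
      (fun x => by
        obtain ⟨y, hy⟩ := hC x x.2
        exact ⟨(LinearMap.rTensor C C.subtype) y, by
          rw [← LinearMap.comp_apply, LinearMap.lTensor_comp_rTensor, hy]; rfl⟩))

variable [FiniteDimensional k H]

/-- The character `d_C ∈ H` of a finite-dimensional subcoalgebra `C ⊆ H`, viewed as a left
`H`-comodule; in the notation of the paper, `d_C = ∑_{d ∈ Irr(C)} ε(d) d`. -/
def dC (C : Submodule k H) (hC : IsSubcoalgebra k H C) : H :=
  (TensorProduct.rid k H)
    ((LinearMap.lTensor H (contractRight k C))
      ((TensorProduct.assoc k H C (Module.Dual k C))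
        ((LinearMap.rTensor (Module.Dual k C) (coact k H C hC))
          (coevaluation k C 1))))

end Subcoalg

section TensorMod

variable (H : Type) [Ring H] [HopfAlgebra k H]
variable (M N : Type) [AddCommGroup M] [Module k M] [Module H M] [IsScalarTower k H M]
variable [AddCommGroup N] [Module k N] [Module H N] [IsScalarTower k H N]

/-- The representation of `H` on `M ⊗ N` via comultiplication. -/
def tensorRep : H →ₐ[k] Module.End k (M ⊗[k] N) :=
  (Module.endTensorEndAlgHom (R := k) (S := k) (A := k) (M := M) (N := N)).comp
    ((Algebra.TensorProduct.map
        (Algebra.lsmul k k M : H →ₐ[k] Module.End k M)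
        (Algebra.lsmul k k N : H →ₐ[k] Module.End k N)).comp
      (Bialgebra.comulAlgHom k H))

end TensorMod

/-- The tensor product of two `H`-modules, with the diagonal `H`-action. -/
def TensorMod (k : Type) [Field k] (H : Type) [Ring H] [HopfAlgebra k H]
    (M N : Type) [AddCommGroup M] [Module k M] [Module H M] [IsScalarTower k H M]
    [AddCommGroup N] [Module k N] [Module H N] [IsScalarTower k H N] : Type := M ⊗[k] N

section TensorMod2

variable (H : Type) [Ring H] [HopfAlgebra k H]
variable (M N : Type) [AddCommGroup M] [Module k M] [Module H M] [IsScalarTower k H M]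
variable [AddCommGroup N] [Module k N] [Module H N] [IsScalarTower k H N]

instance : AddCommGroup (TensorMod k H M N) := inferInstanceAs (AddCommGroup (M ⊗[k] N))
instance : Module k (TensorMod k H M N) := inferInstanceAs (Module k (M ⊗[k] N))

instance : Module H (TensorMod k H M N) :=
  Module.compHom (M ⊗[k] N) (tensorRep k H M N).toRingHom

instance : IsScalarTower k H (TensorMod k H M N) where
  smul_assoc c h z := by
    change tensorRep k H M N (c • h) z = c • (tensorRep k H M N h z)
    rw [map_smul]
    rfl

instance [Module.Finite k M] [Module.Finite k N] : Module.Finite k (TensorMod k H M N) :=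
  inferInstanceAs (Module.Finite k (M ⊗[k] N))

end TensorMod2

section ResMod

variable (K H : Type) [Ring K] [Ring H] [HopfAlgebra k K] [HopfAlgebra k H]
variable (i : K →ₐc[k] H)
variable (M : Type) [AddCommGroup M] [Module k M] [Module H M] [IsScalarTower k H M]

end ResMod

/-- The restriction of an `H`-module to `K` along `i`. -/
def ResMod (k : Type) [Field k] (K H : Type) [Ring K] [Ring H] [HopfAlgebra k K]
    [HopfAlgebra k H] (i : K →ₐc[k] H) (M : Type) [AddCommGroup M] [Module k M]
    [Module H M] [IsScalarTower k H M] : Type := M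

section ResMod2

variable (K H : Type) [Ring K] [Ring H] [HopfAlgebra k K] [HopfAlgebra k H]
variable (i : K →ₐc[k] H)
variable (M : Type) [AddCommGroup M] [Module k M] [Module H M] [IsScalarTower k H M]

instance : AddCommGroup (ResMod k K H i M) := inferInstanceAs (AddCommGroup M)
instance : Module k (ResMod k K H i M) := inferInstanceAs (Module k M)

instance : Module K (ResMod k K H i M) :=
  Module.compHom M ((i : K →ₐ[k] H) : K →+* H)

instance : IsScalarTower k K (ResMod k K H i M) where
  smul_assoc c x m := by
    have h : ((i : K →ₐ[k] H) (c • x)) • (id m : M) =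
        c • (((i : K →ₐ[k] H) x) • (id m : M)) := by
      rw [map_smul, smul_assoc]
    exact h

instance [Module.Finite k M] : Module.Finite k (ResMod k K H i M) :=
  inferInstanceAs (Module.Finite k M)

end ResMod2


end Paper

/-!
Semisimplicity of `H` gives `Λ ∈ H` with `ε(Λ) = 1` and `hΛ = ε(h)Λ`. Evaluating the exchange
identity `∑ x₁ t(a x₂) = ∑ S(a₁) t(a₂ x)` of the integral `t = t_H` at `x = Λ` and using `S² = id`
writes `t(Λ) • id` as a sum of rank-one maps, so `t` is `t(Λ)` times the trace form of the regular
representation. Hence `t` is symmetric and nondegenerate, and so is its restriction to `K`.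

Symmetry makes `F` intertwine the adjoint action on `H` with the coadjoint action on `H*`, and the
exchange identities make it intertwine `∑ f(S v₁) v₂` and `∑ v₁ χ(S v₂)` with left and right
convolution by `f` and `χ`. Normality of `K` and `Δ(K) ⊆ K ⊗ K` then give the stability of `F(K)`
and `K^⊥`. A `D(H)`-endomorphism `T` commutes with left convolution, so it is right convolution by
`T(ε)` and preserves both. Finally `F(K) ∩ K^⊥ = 0` by nondegeneracy on `K`, and
`dim F(K) + dim K^⊥ = dim H`.
-/

open TensorProduct Coalgebra HopfAlgebra WithConv

lemma Coalgebra.sum_counit_right_smul {R A ι : Type*} [CommSemiring R] [AddCommMonoid A]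
    [Module R A] [Coalgebra R A] {a : A} (r : Repr R a ι) :
    ∑ i ∈ r.index, counit (R := R) (r.right i) • r.left i = a := by
  simpa only [map_sum, _root_.TensorProduct.rid_tmul, one_smul] using
    congrArg (_root_.TensorProduct.rid R A) (sum_tmul_counit_eq r)

namespace HopfAlgebra

variable {R A : Type*} [CommSemiring R] [Semiring A] [HopfAlgebra R A]

lemma sum_antipode_tmul_one_mul_comul {a : A} {ι : Type*} (r : Repr R a ι) :
    ∑ i ∈ r.index, (antipode R (r.left i) ⊗ₜ[R] (1 : A)) * comul (r.right i) = 1 ⊗ₜ a := by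
  calc _ = ∑ i ∈ r.index, ∑ j ∈ (ℛ R (r.right i)).index,
        (antipode R (r.left i) * (ℛ R (r.right i)).left j) ⊗ₜ[R] (ℛ R (r.right i)).right j := by
        refine Finset.sum_congr rfl fun i _ => ?_
        simp [← (ℛ R (r.right i)).eq, Finset.mul_sum, Algebra.TensorProduct.tmul_mul_tmul]
    _ = ∑ i ∈ r.index, ∑ j ∈ (ℛ R (r.left i)).index,
        (antipode R ((ℛ R (r.left i)).left j) * (ℛ R (r.left i)).right j) ⊗ₜ[R] r.right i := by
        simpa using congr((LinearMap.mul' R A).rTensor A ((TensorProduct.assoc R A A A).symm $(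
          sum_map_tmul_tmul_eq (antipode R) LinearMap.id LinearMap.id a
            (a₁ := fun i => ℛ R (r.left i)) (a₂ := fun i => ℛ R (r.right i)))))
    _ = 1 ⊗ₜ a := by
        simp_rw [← sum_tmul, sum_antipode_mul_eq_smul, smul_tmul, ← tmul_sum, sum_counit_smul]

lemma sum_comul_mul_one_tmul_antipode {a : A} {ι : Type*} (r : Repr R a ι) :
    ∑ i ∈ r.index, comul (r.left i) * ((1 : A) ⊗ₜ[R] antipode R (r.right i)) = a ⊗ₜ 1 := by
  calc _ = ∑ i ∈ r.index, ∑ j ∈ (ℛ R (r.left i)).index,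
        (ℛ R (r.left i)).left j ⊗ₜ[R] ((ℛ R (r.left i)).right j * antipode R (r.right i)) := by
        refine Finset.sum_congr rfl fun i _ => ?_
        simp [← (ℛ R (r.left i)).eq, Finset.sum_mul, Algebra.TensorProduct.tmul_mul_tmul]
    _ = ∑ i ∈ r.index, ∑ j ∈ (ℛ R (r.right i)).index,
        r.left i ⊗ₜ[R] ((ℛ R (r.right i)).left j * antipode R ((ℛ R (r.right i)).right j)) := by
        simpa using congr((LinearMap.mul' R A).lTensor A $(
          sum_map_tmul_tmul_eq LinearMap.id LinearMap.id (antipode R) a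
            (a₁ := fun i => ℛ R (r.left i)) (a₂ := fun i => ℛ R (r.right i)))).symm
    _ = a ⊗ₜ 1 := by
        simp_rw [← tmul_sum, sum_mul_antipode_eq_smul, ← smul_tmul, ← sum_tmul,
          sum_counit_right_smul]

lemma comul_comp_antipode :
    comul ∘ₗ antipode R = map (antipode R) (antipode R) ∘ₗ
      (TensorProduct.comm R A A).toLinearMap ∘ₗ (comul (R := R) (A := A)) := by
  -- both sides are convolution inverses of `Δ` in `Hom(A, A ⊗ A)`
  symm
  refine toConv_injective (left_inv_eq_right_inv (a := toConv comul) ?_ LinearMap.comul_right_inv)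
  ext a
  set r := ℛ R a
  rw [r.convMul_apply]
  calc _ = ∑ i ∈ r.index, ∑ j ∈ (ℛ R (r.left i)).index,
        (antipode R ((ℛ R (r.left i)).right j) ⊗ₜ[R] antipode R ((ℛ R (r.left i)).left j)) *
          comul (r.right i) := by
        refine Finset.sum_congr rfl fun i _ => ?_
        simp [← (ℛ R (r.left i)).eq, Finset.sum_mul]
    _ = ∑ i ∈ r.index, ∑ j ∈ (ℛ R (r.right i)).index,
        (antipode R ((ℛ R (r.right i)).left j) ⊗ₜ[R] antipode R (r.left i)) *
          comul ((ℛ R (r.right i)).right j) := by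
        simpa using congr((LinearMap.mul' R (A ⊗[R] A))
          (map (map (antipode R) (antipode R) ∘ₗ (TensorProduct.comm R A A).toLinearMap) comul
            ((TensorProduct.assoc R A A A).symm $(sum_map_tmul_tmul_eq LinearMap.id LinearMap.id
              LinearMap.id a (a₁ := fun i => ℛ R (r.left i))
              (a₂ := fun i => ℛ R (r.right i)))))).symm
    _ = ∑ i ∈ r.index, (1 : A) ⊗ₜ[R] (antipode R (r.left i) * r.right i) := by
        refine Finset.sum_congr rfl fun i _ => ?_
        have split (x : A) : antipode R x ⊗ₜ[R] antipode R (r.left i) =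
            ((1 : A) ⊗ₜ antipode R (r.left i)) * (antipode R x ⊗ₜ 1) := by
          simp [Algebra.TensorProduct.tmul_mul_tmul]
        simp_rw [split, mul_assoc, ← Finset.mul_sum, sum_antipode_tmul_one_mul_comul,
          Algebra.TensorProduct.tmul_mul_tmul, one_mul]
    _ = _ := by
        rw [← tmul_sum, sum_antipode_mul_eq_algebraMap_counit]
        simp [Algebra.algebraMap_eq_smul_one, Algebra.TensorProduct.one_def]

lemma comul_antipode {a : A} {ι : Type*} (r : Repr R a ι) :
    comul (antipode R a) = ∑ i ∈ r.index, antipode R (r.right i) ⊗ₜ[R] antipode R (r.left i) := by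
  simpa [← r.eq] using congr($(comul_comp_antipode (R := R) (A := A)) a)

@[simps]
def reprAntipode {a : A} {ι : Type*} (r : Repr R a ι) : Repr R (antipode R a) ι where
  index := r.index
  left i := antipode R (r.right i)
  right i := antipode R (r.left i)
  eq := (comul_antipode r).symm

end HopfAlgebra

lemma BialgHom.map_antipode {R K A : Type*} [CommSemiring R] [Semiring K] [HopfAlgebra R K]
    [Semiring A] [HopfAlgebra R A] (f : K →ₐc[R] A) (x : K) :
    f (antipode R x) = antipode R (f x) := by
  suffices f.toLinearMap ∘ₗ antipode R = antipode R ∘ₗ f.toLinearMap from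
    LinearMap.congr_fun this x
  -- both sides are convolution inverses of `f` in `Hom(K, A)`
  refine toConv_injective (left_inv_eq_right_inv (a := toConv f.toLinearMap) ?_ ?_)
  · have := LinearMap.algHom_comp_convMul_distrib (f : K →ₐ[R] A) (toConv (antipode R))
      (toConv .id)
    rw [LinearMap.antipode_mul_id, LinearMap.algHom_comp_convOne] at this
    exact ofConv_injective this.symm
  · have := LinearMap.convMul_comp_coalgHom_distrib (toConv .id) (toConv (antipode R))
      (f : K →ₗc[R] A)
    rw [LinearMap.id_mul_antipode, LinearMap.convOne_comp_coalgHom] at this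
    exact ofConv_injective this.symm

namespace Paper

section Integral

variable {R A : Type*} [CommSemiring R] [Semiring A] [HopfAlgebra R A]

/-- `∑ x₁ t(x₂) = t(x) 1` -/
def IsLeftIntegral (t : A →ₗ[R] R) : Prop :=
  ∀ x : A, _root_.TensorProduct.rid R A (t.lTensor A (comul x)) = t x • 1

/-- `∑ t(x₁) x₂ = t(x) 1` -/
def IsRightIntegral (t : A →ₗ[R] R) : Prop :=
  ∀ x : A, _root_.TensorProduct.lid R A (t.rTensor A (comul x)) = t x • 1

lemma rid_lTensor_tmul_one_mul (t : A →ₗ[R] R) (c : A) (w : A ⊗[R] A) :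
    _root_.TensorProduct.rid R A (t.lTensor A ((c ⊗ₜ 1) * w)) =
      c * _root_.TensorProduct.rid R A (t.lTensor A w) := by
  induction w using TensorProduct.induction_on with
  | zero => simp
  | tmul u v => simp [Algebra.TensorProduct.tmul_mul_tmul]
  | add v w hv hw => simp [mul_add, hv, hw]

lemma lid_rTensor_mul_one_tmul (t : A →ₗ[R] R) (c : A) (w : A ⊗[R] A) :
    _root_.TensorProduct.lid R A (t.rTensor A (w * (1 ⊗ₜ c))) =
      _root_.TensorProduct.lid R A (t.rTensor A w) * c := by
  induction w using TensorProduct.induction_on with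
  | zero => simp
  | tmul u v => simp [Algebra.TensorProduct.tmul_mul_tmul]
  | add v w hv hw => simp [add_mul, hv, hw]

lemma IsLeftIntegral.sum_apply_mul_smul {t : A →ₗ[R] R} (ht : IsLeftIntegral t) {x a : A}
    {ι κ : Type*} (r : Repr R x ι) (s : Repr R a κ) :
    ∑ p ∈ r.index, t (a * r.right p) • r.left p =
      ∑ q ∈ s.index, t (s.right q * x) • antipode R (s.left q) := by
  set Φ := (_root_.TensorProduct.rid R A).toLinearMap ∘ₗ t.lTensor A
  calc ∑ p ∈ r.index, t (a * r.right p) • r.left p = Φ ((1 ⊗ₜ a) * comul x) := by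
        simp [Φ, ← r.eq, Finset.mul_sum, Algebra.TensorProduct.tmul_mul_tmul]
    _ = Φ (∑ q ∈ s.index, (antipode R (s.left q) ⊗ₜ[R] (1 : A)) * comul (s.right q * x)) := by
        simp_rw [← sum_antipode_tmul_one_mul_comul s, Finset.sum_mul, mul_assoc,
          Bialgebra.comul_mul]
    _ = _ := by
        simp only [Φ, LinearMap.comp_apply, LinearEquiv.coe_coe, map_sum,
          rid_lTensor_tmul_one_mul]
        exact Finset.sum_congr rfl fun q _ => by rw [ht, mul_smul_comm, mul_one]

lemma IsRightIntegral.sum_apply_mul_smul {t : A →ₗ[R] R} (ht : IsRightIntegral t) {x a : A}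
    {ι κ : Type*} (r : Repr R x ι) (s : Repr R a κ) :
    ∑ p ∈ r.index, t (r.left p * a) • r.right p =
      ∑ q ∈ s.index, t (x * s.left q) • antipode R (s.right q) := by
  set Ψ := (_root_.TensorProduct.lid R A).toLinearMap ∘ₗ t.rTensor A
  calc ∑ p ∈ r.index, t (r.left p * a) • r.right p = Ψ (comul x * (a ⊗ₜ 1)) := by
        simp [Ψ, ← r.eq, Finset.sum_mul, Algebra.TensorProduct.tmul_mul_tmul]
    _ = Ψ (∑ q ∈ s.index, comul (x * s.left q) * ((1 : A) ⊗ₜ[R] antipode R (s.right q))) := by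
        simp_rw [← sum_comul_mul_one_tmul_antipode s, Finset.mul_sum, ← mul_assoc,
          Bialgebra.comul_mul]
    _ = _ := by
        simp only [Ψ, LinearMap.comp_apply, LinearEquiv.coe_coe, map_sum,
          lid_rTensor_mul_one_tmul]
        exact Finset.sum_congr rfl fun q _ => by rw [ht, smul_mul_assoc, one_mul]

lemma IsLeftIntegral.comp_bialgHom {K : Type*} [Semiring K] [HopfAlgebra R K] {t : A →ₗ[R] R}
    (ht : IsLeftIntegral t) (i : K →ₐc[R] A) (hi : Function.Injective i) :
    IsLeftIntegral (t ∘ₗ i.toLinearMap) := fun y => hi <| by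
  have h := ht (i y)
  rw [← ((ℛ R y).induced i).eq] at h
  simpa [← (ℛ R y).eq, BialgHom.toCoalgHom_apply] using h

end Integral

section Semisimple

variable {k A : Type*} [Field k] [Ring A] [HopfAlgebra k A] {t : Module.Dual k A}

lemma exists_counit_eq_one_and_mul_eq_counit_smul [IsSemisimpleRing A] :
    ∃ Λ : A, counit (R := k) Λ = 1 ∧ ∀ h : A, h * Λ = counit (R := k) h • Λ := by
  set J : Ideal A := RingHom.ker (Bialgebra.counitAlgHom k A)
  have mem_J (v : A) : v ∈ J ↔ counit (R := k) v = 0 := RingHom.mem_ker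
  obtain ⟨I, hJI⟩ := exists_isCompl J
  obtain ⟨j, hj, Λ, hΛ, hsum⟩ :=
    Submodule.mem_sup.1 (hJI.sup_eq_top ▸ Submodule.mem_top (x := (1 : A)))
  have hεΛ : counit (R := k) Λ = 1 := by
    simpa [(mem_J j).1 hj] using congr(counit (R := k) $hsum)
  refine ⟨Λ, hεΛ, fun h => sub_eq_zero.1 ((Submodule.disjoint_def.1 hJI.disjoint) _ ?_ ?_)⟩
  · simp [mem_J, Bialgebra.counit_mul, hεΛ]
  · refine I.sub_mem (I.smul_mem h hΛ) ?_
    rw [← algebraMap_smul A]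
    exact I.smul_mem _ hΛ

lemma IsLeftIntegral.sum_apply_mul_smul_eq_smul_antipode (ht : IsLeftIntegral t) {Λ : A}
    (hΛ : ∀ h : A, h * Λ = counit (R := k) h • Λ) {ι : Type*} (r : Repr k Λ ι) (a : A) :
    ∑ p ∈ r.index, t (a * r.right p) • r.left p = t Λ • antipode k a := by
  rw [ht.sum_apply_mul_smul r (ℛ k a)]
  simp_rw [hΛ, map_smul, smul_eq_mul, mul_comm _ (t Λ), ← smul_smul, ← Finset.smul_sum,
    ← map_smul, ← map_sum, sum_counit_right_smul]
  exact (map_smul _ _ _).symm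

variable [FiniteDimensional k A]

lemma IsLeftIntegral.mul_trace_mulLeft (hS : Function.Involutive (antipode k : A → A))
    (ht : IsLeftIntegral t) {Λ : A} (hεΛ : counit (R := k) Λ = 1)
    (hΛ : ∀ h : A, h * Λ = counit (R := k) h • Λ) (x : A) :
    t Λ * LinearMap.trace k A (LinearMap.mulLeft k x) = t x := by
  set r := ℛ k Λ
  have hid : t Λ • LinearMap.id = ∑ p ∈ r.index,
      (t ∘ₗ LinearMap.mulRight k (r.right p)).smulRight (antipode k (r.left p)) := by
    ext a
    simpa [hS a] using (congr(antipode k $(ht.sum_apply_mul_smul_eq_smul_antipode hΛ r a))).symm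
  calc t Λ * LinearMap.trace k A (LinearMap.mulLeft k x)
      = LinearMap.trace k A (LinearMap.mulLeft k x ∘ₗ (t Λ • LinearMap.id)) := by
        rw [LinearMap.comp_smul, LinearMap.comp_id, map_smul, smul_eq_mul]
    _ = ∑ p ∈ r.index, t (x * antipode k (r.left p) * r.right p) := by
        rw [hid, ← Module.End.mul_eq_comp, Finset.mul_sum, map_sum]
        refine Finset.sum_congr rfl fun p _ => ?_
        have : LinearMap.mulLeft k x ∘ₗ (t ∘ₗ LinearMap.mulRight k (r.right p)).smulRight
            (antipode k (r.left p)) = (t ∘ₗ LinearMap.mulRight k (r.right p)).smulRight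
            (x * antipode k (r.left p)) := by
          ext; simp
        rw [Module.End.mul_eq_comp, this, LinearMap.trace_smulRight]
        rfl
    _ = t x := by
        simp_rw [mul_assoc, ← map_sum, ← Finset.mul_sum, sum_antipode_mul_eq_smul, hεΛ, one_smul,
          mul_one]

variable [IsSemisimpleRing A] (hS : Function.Involutive (antipode k : A → A))
include hS

lemma IsLeftIntegral.apply_mul_comm (ht : IsLeftIntegral t) (a b : A) : t (a * b) = t (b * a) := by
  obtain ⟨Λ, hεΛ, hΛ⟩ := exists_counit_eq_one_and_mul_eq_counit_smul (k := k) (A := A)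
  rw [← ht.mul_trace_mulLeft hS hεΛ hΛ (a * b), ← ht.mul_trace_mulLeft hS hεΛ hΛ (b * a),
    LinearMap.mulLeft_mul, LinearMap.mulLeft_mul, ← Module.End.mul_eq_comp,
    ← Module.End.mul_eq_comp, LinearMap.trace_mul_comm]

lemma IsLeftIntegral.eq_zero_of_forall_apply_mul_eq_zero (ht : IsLeftIntegral t) (ht0 : t ≠ 0)
    {a : A} (ha : ∀ b, t (b * a) = 0) : a = 0 := by
  obtain ⟨Λ, hεΛ, hΛ⟩ := exists_counit_eq_one_and_mul_eq_counit_smul (k := k) (A := A)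
  have htΛ : t Λ ≠ 0 := fun h0 =>
    ht0 (LinearMap.ext fun x => by rw [← ht.mul_trace_mulLeft hS hεΛ hΛ x, h0, zero_mul]; rfl)
  have hSa := ht.sum_apply_mul_smul_eq_smul_antipode hΛ (ℛ k Λ) a
  simp_rw [ht.apply_mul_comm hS a, ha, zero_smul, Finset.sum_const_zero] at hSa
  rw [← hS a, (smul_eq_zero.1 hSa.symm).resolve_left htΛ, map_zero]

end Semisimple

section DoubleModule

variable {k H : Type} [Field k] [Ring H] [HopfAlgebra k H]

lemma conv_apply (f g : Module.Dual k H) {x : H} {ι : Type*} (r : Repr k x ι) :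
    conv k H f g x = ∑ p ∈ r.index, f (r.left p) * g (r.right p) :=
  r.convMul_apply (toConv f) (toConv g)

lemma conv_counit (f : Module.Dual k H) : conv k H f counit = f :=
  congr(ofConv $(mul_one (toConv f)))

lemma isLeftIntegral_of_conv {t : Module.Dual k H} (ht : ∀ f, conv k H f t = f 1 • t) :
    IsLeftIntegral t := fun x => by
  refine sub_eq_zero.1 ((Module.forall_dual_apply_eq_zero_iff k _).1 fun f => ?_)
  have := congr($(ht f) x)
  simp only [conv_apply f t (ℛ k x), LinearMap.smul_apply, smul_eq_mul] at this
  rw [map_sub, sub_eq_zero]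
  simpa [← (ℛ k x).eq, mul_comm] using this

lemma isRightIntegral_of_conv {t : Module.Dual k H} (ht : ∀ f, conv k H t f = f 1 • t) :
    IsRightIntegral t := fun x => by
  refine sub_eq_zero.1 ((Module.forall_dual_apply_eq_zero_iff k _).1 fun f => ?_)
  have := congr($(ht f) x)
  simp only [conv_apply t f (ℛ k x), LinearMap.smul_apply, smul_eq_mul] at this
  rw [map_sub, sub_eq_zero]
  simpa [← (ℛ k x).eq, mul_comm] using this

lemma coadAct_apply (f : Module.Dual k H) {a : H} {ι : Type*} (r : Repr k a ι) (x : H) :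
    coadAct k H a f x = ∑ j ∈ r.index, f (antipode k (r.right j) * (x * r.left j)) := by
  simp [coadAct, sandwich, ← r.eq]

lemma adAct_apply {a : H} {ι : Type*} (r : Repr k a ι) (v : H) :
    adAct k H a v = ∑ j ∈ r.index, r.left j * (v * antipode k (r.right j)) := by
  simp [adAct, sandwich, ← r.eq]

lemma dualAct_apply (g : Module.Dual k H) {v : H} {ι : Type*} (r : Repr k v ι) :
    dualAct k H g v = ∑ j ∈ r.index, g (antipode k (r.left j)) • r.right j := by
  simp [dualAct, ← r.eq]

lemma chiOp_apply (χ : Module.Dual k H) {v : H} {ι : Type*} (r : Repr k v ι) :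
    chiOp k H χ v = ∑ j ∈ r.index, χ (antipode k (r.right j)) • r.left j := by
  simp [chiOp, ← r.eq]

lemma fourier_apply (t : Module.Dual k H) (v x : H) : fourier k H t v x = t (x * v) := rfl

lemma coadAct_apply_eq_apply_adAct (hS : Function.Involutive (antipode k : H → H))
    (f : Module.Dual k H) (a x : H) : coadAct k H a f x = f (adAct k H (antipode k a) x) := by
  simp [coadAct_apply f (ℛ k a), adAct_apply (reprAntipode (ℛ k a)), hS _]

lemma eq_conv_of_forall_conv_comm {T : Module.Dual k H →ₗ[k] Module.Dual k H}
    (hT : ∀ g f : Module.Dual k H, T (conv k H g f) = conv k H g (T f)) (f : Module.Dual k H) :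
    T f = conv k H f (T counit) := by
  rw [← hT, conv_counit]

variable {t : Module.Dual k H}

lemma coadAct_fourier (hsymm : ∀ a b, t (a * b) = t (b * a)) (a v : H) :
    coadAct k H a (fourier k H t v) = fourier k H t (adAct k H a v) := by
  ext x
  rw [coadAct_apply _ (ℛ k a), fourier_apply, adAct_apply (ℛ k a), Finset.mul_sum, map_sum]
  refine Finset.sum_congr rfl fun j _ => ?_
  rw [fourier_apply, mul_assoc, hsymm]
  simp only [mul_assoc]

lemma conv_fourier (ht : IsLeftIntegral t) (hsymm : ∀ a b, t (a * b) = t (b * a))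
    (g : Module.Dual k H) (v : H) :
    conv k H g (fourier k H t v) = fourier k H t (dualAct k H g v) := by
  ext x
  calc conv k H g (fourier k H t v) x
      = g (∑ p ∈ (ℛ k x).index, t (v * (ℛ k x).right p) • (ℛ k x).left p) := by
        simp [conv_apply _ _ (ℛ k x), fourier_apply, hsymm _ v, mul_comm]
    _ = g (∑ q ∈ (ℛ k v).index, t ((ℛ k v).right q * x) • antipode k ((ℛ k v).left q)) := by
        rw [ht.sum_apply_mul_smul (ℛ k x) (ℛ k v)]
    _ = fourier k H t (dualAct k H g v) x := by
        simp [fourier_apply, dualAct_apply _ (ℛ k v), hsymm x, mul_comm]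

lemma fourier_conv (ht : IsRightIntegral t) (χ : Module.Dual k H) (v : H) :
    conv k H (fourier k H t v) χ = fourier k H t (chiOp k H χ v) := by
  ext x
  calc conv k H (fourier k H t v) χ x
      = χ (∑ p ∈ (ℛ k x).index, t ((ℛ k x).left p * v) • (ℛ k x).right p) := by
        simp [conv_apply _ _ (ℛ k x), fourier_apply]
    _ = χ (∑ q ∈ (ℛ k v).index, t (x * (ℛ k v).left q) • antipode k ((ℛ k v).right q)) := by
        rw [ht.sum_apply_mul_smul (ℛ k x) (ℛ k v)]
    _ = fourier k H t (chiOp k H χ v) x := by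
        simp [fourier_apply, chiOp_apply _ (ℛ k v), mul_comm]

end DoubleModule

section Subalgebra

variable {k H K : Type} [Field k] [Ring H] [HopfAlgebra k H] [Ring K] [HopfAlgebra k K]
  (i : K →ₐc[k] H)

lemma involutive_antipode_of_injective (hi : Function.Injective i)
    (hS : Function.Involutive (antipode k : H → H)) : Function.Involutive (antipode k : K → K) :=
  fun y => hi <| by rw [i.map_antipode, i.map_antipode, hS]

lemma dualAct_mem_range (g : Module.Dual k H) (y : K) :
    dualAct k H g (i y) ∈ LinearMap.range i.toLinearMap := by
  rw [dualAct_apply g ((ℛ k y).induced i)]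
  exact Submodule.sum_mem _ fun j _ => Submodule.smul_mem _ _ ⟨_, rfl⟩

lemma chiOp_mem_range (χ : Module.Dual k H) (y : K) :
    chiOp k H χ (i y) ∈ LinearMap.range i.toLinearMap := by
  rw [chiOp_apply χ ((ℛ k y).induced i)]
  exact Submodule.sum_mem _ fun j _ => Submodule.smul_mem _ _ ⟨_, rfl⟩

variable {i}

lemma conv_mem_dualAnnihilator_of_right_mem {f : Module.Dual k H}
    (hf : f ∈ (LinearMap.range i.toLinearMap).dualAnnihilator) (g : Module.Dual k H) :
    conv k H g f ∈ (LinearMap.range i.toLinearMap).dualAnnihilator := by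
  rw [Submodule.mem_dualAnnihilator] at hf ⊢
  rintro _ ⟨y, rfl⟩
  change conv k H g f (i y) = 0
  rw [conv_apply g f ((ℛ k y).induced i)]
  exact Finset.sum_eq_zero fun j _ => mul_eq_zero_of_right _ (hf _ ⟨_, rfl⟩)

lemma conv_mem_dualAnnihilator_of_left_mem {f : Module.Dual k H}
    (hf : f ∈ (LinearMap.range i.toLinearMap).dualAnnihilator) (g : Module.Dual k H) :
    conv k H f g ∈ (LinearMap.range i.toLinearMap).dualAnnihilator := by
  rw [Submodule.mem_dualAnnihilator] at hf ⊢
  rintro _ ⟨y, rfl⟩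
  change conv k H f g (i y) = 0
  rw [conv_apply f g ((ℛ k y).induced i)]
  exact Finset.sum_eq_zero fun j _ => mul_eq_zero_of_left (hf _ ⟨_, rfl⟩) _

lemma conv_mem_map_fourier_of_right_mem {t : Module.Dual k H} (ht : IsLeftIntegral t)
    (hsymm : ∀ a b, t (a * b) = t (b * a)) (g : Module.Dual k H) {f : Module.Dual k H}
    (hf : f ∈ (LinearMap.range i.toLinearMap).map (fourier k H t)) :
    conv k H g f ∈ (LinearMap.range i.toLinearMap).map (fourier k H t) := by
  obtain ⟨_, ⟨y, rfl⟩, rfl⟩ := hf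
  rw [conv_fourier ht hsymm]
  exact Submodule.mem_map_of_mem (dualAct_mem_range i g y)

lemma conv_mem_map_fourier_of_left_mem {t : Module.Dual k H} (ht : IsRightIntegral t)
    (χ : Module.Dual k H) {f : Module.Dual k H}
    (hf : f ∈ (LinearMap.range i.toLinearMap).map (fourier k H t)) :
    conv k H f χ ∈ (LinearMap.range i.toLinearMap).map (fourier k H t) := by
  obtain ⟨_, ⟨y, rfl⟩, rfl⟩ := hf
  rw [fourier_conv ht]
  exact Submodule.mem_map_of_mem (chiOp_mem_range i χ y)

lemma isCompl_map_fourier_dualAnnihilator [FiniteDimensional k H] {t : Module.Dual k H}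
    (hH : ∀ v : H, (∀ x, t (x * v) = 0) → v = 0)
    (hK : ∀ y : K, (∀ b, t (i (b * y)) = 0) → y = 0) :
    IsCompl ((LinearMap.range i.toLinearMap).map (fourier k H t))
      (LinearMap.range i.toLinearMap).dualAnnihilator := by
  have hinj : Function.Injective (fourier k H t) :=
    injective_iff_map_eq_zero _ |>.2 fun v hv => hH v fun x => congr($hv x)
  refine (Submodule.isCompl_iff_disjoint _ _ ?_).2 <| Submodule.disjoint_def.2 ?_
  · rw [← (Submodule.equivMapOfInjective _ hinj _).finrank_eq,
      Subspace.finrank_add_finrank_dualAnnihilator_eq, Subspace.dual_finrank_eq]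
  · rintro _ ⟨_, ⟨y, rfl⟩, rfl⟩ hann
    have hy : y = 0 := hK y fun b => by
      rw [map_mul]
      exact (Submodule.mem_dualAnnihilator _).1 hann _ ⟨b, rfl⟩
    simp [hy]

variable (hnorm : ∀ (h : H) (x : K), adAct k H h (i x) ∈ Set.range i)
include hnorm

lemma coadAct_mem_dualAnnihilator (hS : Function.Involutive (antipode k : H → H)) (a : H)
    {f : Module.Dual k H} (hf : f ∈ (LinearMap.range i.toLinearMap).dualAnnihilator) :
    coadAct k H a f ∈ (LinearMap.range i.toLinearMap).dualAnnihilator := by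
  rw [Submodule.mem_dualAnnihilator] at hf ⊢
  rintro _ ⟨y, rfl⟩
  obtain ⟨z, hz⟩ := hnorm (antipode k a) y
  rw [coadAct_apply_eq_apply_adAct hS]
  exact hz ▸ hf _ ⟨z, rfl⟩

lemma coadAct_mem_map_fourier {t : Module.Dual k H} (hsymm : ∀ a b, t (a * b) = t (b * a))
    (a : H) {f : Module.Dual k H}
    (hf : f ∈ (LinearMap.range i.toLinearMap).map (fourier k H t)) :
    coadAct k H a f ∈ (LinearMap.range i.toLinearMap).map (fourier k H t) := by
  obtain ⟨_, ⟨y, rfl⟩, rfl⟩ := hf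
  obtain ⟨z, hz⟩ := hnorm a y
  rw [coadAct_fourier hsymm]
  exact ⟨_, ⟨z, rfl⟩, congrArg _ hz⟩

end Subalgebra

theorem fourier_image_and_annihilator_are_DH_submodules_general
    (k : Type) [Field k]
    (H : Type) [Ring H] [HopfAlgebra k H] [FiniteDimensional k H] [IsSemisimpleRing H]
    (K : Type) [Ring K] [HopfAlgebra k K] [FiniteDimensional k K] [IsSemisimpleRing K]
    (i : K →ₐc[k] H) (hi : Function.Injective i)
    (hnorm : ∀ (h : H) (x : K), adAct k H h (i x) ∈ Set.range i)
    (hS : ∀ x : H, HopfAlgebra.antipode (R := k) (HopfAlgebra.antipode (R := k) x) = x)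
    (tH : Module.Dual k H)
    (htH : ∀ f : Module.Dual k H, conv k H f tH = f 1 • tH ∧ conv k H tH f = f 1 • tH)
    (htH1 : tH 1 = 1)
    :
    (∀ (a : H), ∀ f ∈ Submodule.map (fourier k H tH) (LinearMap.range i.toLinearMap),
      coadAct k H a f ∈ Submodule.map (fourier k H tH) (LinearMap.range i.toLinearMap)) ∧
    (∀ (g : Module.Dual k H),
      ∀ f ∈ Submodule.map (fourier k H tH) (LinearMap.range i.toLinearMap),
      conv k H g f ∈ Submodule.map (fourier k H tH) (LinearMap.range i.toLinearMap)) ∧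
    (∀ (a : H), ∀ f ∈ (LinearMap.range i.toLinearMap).dualAnnihilator,
      coadAct k H a f ∈ (LinearMap.range i.toLinearMap).dualAnnihilator) ∧
    (∀ (g : Module.Dual k H), ∀ f ∈ (LinearMap.range i.toLinearMap).dualAnnihilator,
      conv k H g f ∈ (LinearMap.range i.toLinearMap).dualAnnihilator) ∧
    (∀ T : Module.Dual k H →ₗ[k] Module.Dual k H,
      (∀ (a : H) (f : Module.Dual k H), T (coadAct k H a f) = coadAct k H a (T f)) →
      (∀ (g f : Module.Dual k H), T (conv k H g f) = conv k H g (T f)) →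
      (∀ f ∈ Submodule.map (fourier k H tH) (LinearMap.range i.toLinearMap),
          T f ∈ Submodule.map (fourier k H tH) (LinearMap.range i.toLinearMap)) ∧
      (∀ f ∈ (LinearMap.range i.toLinearMap).dualAnnihilator,
          T f ∈ (LinearMap.range i.toLinearMap).dualAnnihilator)) ∧
    IsCompl (Submodule.map (fourier k H tH) (LinearMap.range i.toLinearMap))
      ((LinearMap.range i.toLinearMap).dualAnnihilator) := by
  have hL : IsLeftIntegral tH := isLeftIntegral_of_conv fun f => (htH f).1
  have hR : IsRightIntegral tH := isRightIntegral_of_conv fun f => (htH f).2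
  have hsymm := hL.apply_mul_comm hS
  have htH0 : tH ≠ 0 := by
    rintro rfl
    simp at htH1
  have htK0 : tH ∘ₗ i.toLinearMap ≠ 0 := fun h0 => by
    simpa [BialgHom.toCoalgHom_apply, htH1] using congr($h0 1)
  have hndH := fun v => hL.eq_zero_of_forall_apply_mul_eq_zero hS htH0 (a := v)
  have hndK := fun y => (hL.comp_bialgHom i hi).eq_zero_of_forall_apply_mul_eq_zero
    (involutive_antipode_of_injective i hi hS) htK0 (a := y)
  refine ⟨fun a f => coadAct_mem_map_fourier hnorm hsymm a,
    fun g f => conv_mem_map_fourier_of_right_mem hL hsymm g,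
    fun a f => coadAct_mem_dualAnnihilator hnorm hS a,
    fun g f hf => conv_mem_dualAnnihilator_of_right_mem hf g,
    fun T _ hT => ⟨fun f hf => ?_, fun f hf => ?_⟩,
    isCompl_map_fourier_dualAnnihilator hndH hndK⟩
  · rw [eq_conv_of_forall_conv_comm hT]
    exact conv_mem_map_fourier_of_left_mem hR _ hf
  · rw [eq_conv_of_forall_conv_comm hT]
    exact conv_mem_dualAnnihilator_of_left_mem hf _

/-- for a normal Hopf subalgebra `K ⊆ H`, both `F(K)` and `K^⊥` are
`D(H)`-submodules of `H*` (i.e. stable under the coadjoint `H`-action and under left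
convolution by `H*`), each is a sum of full homogeneous components (equivalently, stable
under every `D(H)`-endomorphism of `H*`), and `H* = F(K) ⊕ K^⊥` as `D(H)`-modules. -/
theorem fourier_image_and_annihilator_are_DH_submodules
    (k : Type) [Field k] [IsAlgClosed k] [CharZero k]
    (H : Type) [Ring H] [HopfAlgebra k H] [FiniteDimensional k H] [IsSemisimpleRing H]
    (K : Type) [Ring K] [HopfAlgebra k K] [FiniteDimensional k K] [IsSemisimpleRing K]
    (i : K →ₐc[k] H) (hi : Function.Injective i)
    (hnorm : ∀ (h : H) (x : K), adAct k H h (i x) ∈ Set.range i)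
    (hS : ∀ x : H, HopfAlgebra.antipode (R := k) (HopfAlgebra.antipode (R := k) x) = x)
    (tH : Module.Dual k H)
    (htH : ∀ f : Module.Dual k H, conv k H f tH = f 1 • tH ∧ conv k H tH f = f 1 • tH)
    (htH1 : tH 1 = 1)
    :
    (∀ (a : H), ∀ f ∈ Submodule.map (fourier k H tH) (LinearMap.range i.toLinearMap),
      coadAct k H a f ∈ Submodule.map (fourier k H tH) (LinearMap.range i.toLinearMap)) ∧
    (∀ (g : Module.Dual k H),
      ∀ f ∈ Submodule.map (fourier k H tH) (LinearMap.range i.toLinearMap),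
      conv k H g f ∈ Submodule.map (fourier k H tH) (LinearMap.range i.toLinearMap)) ∧
    (∀ (a : H), ∀ f ∈ (LinearMap.range i.toLinearMap).dualAnnihilator,
      coadAct k H a f ∈ (LinearMap.range i.toLinearMap).dualAnnihilator) ∧
    (∀ (g : Module.Dual k H), ∀ f ∈ (LinearMap.range i.toLinearMap).dualAnnihilator,
      conv k H g f ∈ (LinearMap.range i.toLinearMap).dualAnnihilator) ∧
    (∀ T : Module.Dual k H →ₗ[k] Module.Dual k H,
      (∀ (a : H) (f : Module.Dual k H), T (coadAct k H a f) = coadAct k H a (T f)) →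
      (∀ (g f : Module.Dual k H), T (conv k H g f) = conv k H g (T f)) →
      (∀ f ∈ Submodule.map (fourier k H tH) (LinearMap.range i.toLinearMap),
          T f ∈ Submodule.map (fourier k H tH) (LinearMap.range i.toLinearMap)) ∧
      (∀ f ∈ (LinearMap.range i.toLinearMap).dualAnnihilator,
          T f ∈ (LinearMap.range i.toLinearMap).dualAnnihilator)) ∧
    IsCompl (Submodule.map (fourier k H tH) (LinearMap.range i.toLinearMap))
      ((LinearMap.range i.toLinearMap).dualAnnihilator) :=
  fourier_image_and_annihilator_are_DH_submodules_general k H K i hi hnorm hS tH htH htH1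

end Paper
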